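/- There is a bijection between the set of pairs (M, P), where M is a Motzkin path of order n and P is a hump of M, and the set of super Motzkin paths of order n whose first non-flat step is an up-step. -/

import Mathlib

inductive MStep | U | F | D
deriving DecidableEq

def IsSuperMotzkin (w : List MStep) : Prop :=
  w.count MStep.U = w.count MStep.D

def IsMotzkin (w : List MStep) : Prop :=
  IsSuperMotzkin w ∧ ∀ p, p <+: w → p.count MStep.D ≤ p.count MStep.U

def IsHumpAt (w : List MStep) (i : ℕ) : Prop :=
  ∃ k, w[i]? = some MStep.U ∧ (∀ j < k, w[i + 1 + j]? = some MStep.F) ∧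
    w[i + 1 + k]? = some MStep.D

/-- The first non-flat step of `w` exists and is a `U`. -/
def FirstNonFlatIsU (w : List MStep) : Prop :=
  ∃ p s, w = p ++ MStep.U :: s ∧ ∀ x ∈ p, x = MStep.F

/-!
A Motzkin path with a marked hump factors as `A U F^k D B` where `A` never goes below its
starting height, `B` ends at its minimum height, and `height A + height B = 0`. It is sent to
`F^k U B D A`, a rearrangement of itself whose first non-flat step is `U`. Conversely, write a
super Motzkin path with first non-flat step `U` as `F^k U t`, so that `t` has height `-1`; cutting
`t` right after its first prefix of minimal height recovers `t = B D A`, and this is the only cut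
with `B` ending at its minimum and `A` never below its start.
-/

theorem List.forall_prefix_cons_iff {α : Type*} {P : List α → Prop} {a : α} {l : List α} :
    (∀ p, p <+: a :: l → P p) ↔ P [] ∧ ∀ p, p <+: l → P (a :: p) := by
  simp only [List.prefix_cons_iff]
  constructor
  · exact fun h => ⟨h [] (.inl rfl), fun p hp => h _ (.inr ⟨p, rfl, hp⟩)⟩
  · rintro ⟨h₀, h⟩ p (rfl | ⟨q, rfl, hq⟩)
    exacts [h₀, h q hq]

theorem List.forall_prefix_append_iff {α : Type*} {P : List α → Prop} {l₁ l₂ : List α} :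
    (∀ p, p <+: l₁ ++ l₂ → P p) ↔ (∀ p, p <+: l₁ → P p) ∧ ∀ p, p <+: l₂ → P (l₁ ++ p) := by
  constructor
  · exact fun h => ⟨fun p hp => h p (hp.trans (List.prefix_append l₁ l₂)),
      fun p hp => h _ ((List.prefix_append_right_inj l₁).2 hp)⟩
  · rintro ⟨h₁, h₂⟩ p hp
    rcases List.prefix_or_prefix_of_prefix hp (List.prefix_append l₁ l₂) with hp₁ | ⟨q, rfl⟩
    · exact h₁ p hp₁
    · exact h₂ q ((List.prefix_append_right_inj l₁).1 hp)

theorem List.exists_shortest_minimizing_prefix {α β : Type*} [LinearOrder β] (f : List α → β)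
    (t : List α) :
    ∃ q, q <+: t ∧ ∀ p, p <+: t → f q ≤ f p ∧ (p.length < q.length → f q < f p) := by
  classical
  obtain ⟨q, hq, hmin⟩ :=
    t.inits.toFinset.exists_min_image (fun p => toLex (f p, p.length)) ⟨[], by simp⟩
  simp only [List.mem_toFinset, List.mem_inits, Prod.Lex.toLex_le_toLex] at hq hmin
  refine ⟨q, hq, fun p hp => ?_⟩
  rcases hmin p hp with h | ⟨h, h'⟩
  · exact ⟨h.le, fun _ => h⟩
  · exact ⟨h.le, fun hl => absurd h' (not_le.2 hl)⟩

namespace MStep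

def height (w : List MStep) : ℤ := w.count U - w.count D

@[simp] theorem height_nil : height [] = 0 := rfl

@[simp] theorem height_cons_U (w : List MStep) : height (U :: w) = height w + 1 := by
  simp only [height, List.count_cons_self, List.count_cons_of_ne (by decide : U ≠ D)]
  push_cast
  ring

@[simp] theorem height_cons_F (w : List MStep) : height (F :: w) = height w := by
  simp [height]

@[simp] theorem height_cons_D (w : List MStep) : height (D :: w) = height w - 1 := by
  simp only [height, List.count_cons_self, List.count_cons_of_ne (by decide : D ≠ U)]
  push_cast
  ring

@[simp] theorem height_append (v w : List MStep) : height (v ++ w) = height v + height w := by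
  simp only [height, List.count_append]
  push_cast
  ring

@[simp] theorem height_replicate_F (k : ℕ) : height (List.replicate k F) = 0 := by
  simp [height, List.count_replicate]

def StaysNonneg (w : List MStep) : Prop := ∀ p, p <+: w → 0 ≤ height p

def EndsAtMin (w : List MStep) : Prop := ∀ p, p <+: w → height w ≤ height p

theorem isSuperMotzkin_iff {w : List MStep} : IsSuperMotzkin w ↔ height w = 0 := by
  simp only [IsSuperMotzkin, height]; omega

theorem isMotzkin_iff {w : List MStep} : IsMotzkin w ↔ height w = 0 ∧ StaysNonneg w := by
  simp only [IsMotzkin, StaysNonneg, isSuperMotzkin_iff, height, sub_nonneg, Nat.cast_le]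

theorem isHumpAt_iff {M : List MStep} {i : ℕ} :
    IsHumpAt M i ↔ ∃ A k B, M = A ++ U :: (List.replicate k F ++ D :: B) ∧ A.length = i := by
  constructor
  · rintro ⟨k, hU, hF, hD⟩
    have hi : i < M.length := (List.getElem?_eq_some_iff.1 hU).1
    refine ⟨M.take i, k, M.drop (i + k + 2), ?_, List.length_take_of_le hi.le⟩
    conv_lhs => rw [← List.take_append_drop i M]
    congr 1
    apply List.ext_getElem?
    rintro (_ | j)
    · simpa using hU
    · rcases lt_or_ge j k with hj | hj
      · grind [hF j hj]
      · grind
  · rintro ⟨A, k, B, rfl, rfl⟩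
    exact ⟨k, by simp, fun j hj => by grind, by grind⟩

theorem isMotzkin_hump_iff {A B : List MStep} {k : ℕ} :
    IsMotzkin (A ++ U :: (List.replicate k F ++ D :: B)) ↔
      height A + height B = 0 ∧ StaysNonneg A ∧ EndsAtMin B := by
  simp only [isMotzkin_iff, StaysNonneg, EndsAtMin, List.forall_prefix_append_iff,
    List.forall_prefix_cons_iff, List.prefix_replicate_iff, height_nil, height_append,
    height_cons_U, height_cons_D, height_replicate_F]
  constructor
  · rintro ⟨h0, hA, -, -, -, hB⟩
    exact ⟨by linarith, hA, fun p hp => by linarith [hB p hp]⟩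
  · rintro ⟨h0, hA, hB⟩
    have hA0 := hA A (List.prefix_refl A)
    refine ⟨by linarith, hA, by linarith, fun p ⟨_, hp⟩ => ?_, by linarith,
      fun p hp => by linarith [hB p hp]⟩
    rw [hp, height_replicate_F]
    linarith

theorem EndsAtMin.height_nonpos {B C : List MStep} (h : EndsAtMin (B ++ D :: C)) :
    height C ≤ 0 := by
  have := h (B ++ [D]) (by simp)
  simp only [height_append, height_cons_D, height_nil] at this
  linarith

theorem StaysNonneg.height_pos {A C : List MStep} (h : StaysNonneg (C ++ D :: A)) :
    0 < height C := by
  have := h (C ++ [D]) (by simp)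
  simp only [height_append, height_cons_D, height_nil] at this
  linarith

theorem eq_of_append_D_eq {B A B' A' : List MStep} (h : B ++ D :: A = B' ++ D :: A')
    (hB : EndsAtMin B) (hA : StaysNonneg A) (hB' : EndsAtMin B') (hA' : StaysNonneg A') :
    B = B' ∧ A = A' := by
  rcases List.append_eq_append_iff.mp h with ⟨_ | ⟨x, C⟩, rfl, hC⟩ | ⟨_ | ⟨x, C⟩, rfl, hC⟩
  · simp_all
  · obtain ⟨rfl, rfl⟩ := List.cons_eq_cons.mp hC
    exact absurd hA.height_pos (not_lt.2 hB'.height_nonpos)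
  · simp_all
  · obtain ⟨rfl, rfl⟩ := List.cons_eq_cons.mp hC
    exact absurd hA'.height_pos (not_lt.2 hB.height_nonpos)

theorem exists_eq_append_D_endsAtMin_staysNonneg {t : List MStep} (ht : height t < 0) :
    ∃ B A, t = B ++ D :: A ∧ EndsAtMin B ∧ StaysNonneg A := by
  obtain ⟨q, ⟨A, rfl⟩, hq⟩ := List.exists_shortest_minimizing_prefix height t
  obtain rfl | ⟨B, x, rfl⟩ := List.eq_nil_or_concat q
  · have := (hq _ (List.prefix_refl _)).1
    simp only [height_nil] at this
    exact absurd ht (not_lt.2 this)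
  rw [List.concat_eq_append] at hq ⊢
  have hx : x = D := by
    have := (hq B (by simp)).2 (by simp)
    cases x <;> simp at this ⊢
  subst hx
  refine ⟨B, A, by simp, fun p hp => ?_, fun p hp => ?_⟩
  · have := (hq p (hp.trans (by simp))).2 (by simpa using Nat.lt_succ_of_le hp.length_le)
    simp only [height_append, height_cons_D, height_nil] at this
    linarith
  · have := (hq (B ++ [D] ++ p) ((List.prefix_append_right_inj _).2 hp)).1
    simp only [height_append, height_cons_D, height_nil] at this
    linarith

theorem replicate_F_append_U_inj {k k' : ℕ} {v w : List MStep}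
    (h : List.replicate k F ++ U :: v = List.replicate k' F ++ U :: w) : k = k' ∧ v = w := by
  induction k generalizing k' <;> cases k' <;> simp_all [List.replicate_succ]

theorem firstNonFlatIsU_iff {w : List MStep} :
    FirstNonFlatIsU w ↔ ∃ k v, w = List.replicate k F ++ U :: v := by
  constructor
  · rintro ⟨p, v, rfl, hp⟩
    exact ⟨p.length, v, by rw [← List.eq_replicate_iff.2 ⟨rfl, hp⟩]⟩
  · rintro ⟨k, v, rfl⟩
    exact ⟨_, v, rfl, fun _ => List.eq_of_mem_replicate⟩

def humpMap (M : List MStep) (i : ℕ) : List MStep :=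
  (M.drop (i + 1)).replace D U ++ D :: M.take i

theorem humpMap_hump (A B : List MStep) (k : ℕ) :
    humpMap (A ++ U :: (List.replicate k F ++ D :: B)) A.length =
      List.replicate k F ++ U :: (B ++ D :: A) := by
  simp [humpMap, List.drop_append, List.drop_eq_nil_of_le, List.replace_append_right]

theorem humpMap_perm {M : List MStep} {i : ℕ} (hi : IsHumpAt M i) : (humpMap M i).Perm M := by
  obtain ⟨A, k, B, rfl, rfl⟩ := isHumpAt_iff.1 hi
  rw [humpMap_hump, List.perm_iff_count]
  intro a
  simp only [List.count_append, List.count_cons, List.count_replicate]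
  omega

theorem firstNonFlatIsU_humpMap {M : List MStep} {i : ℕ} (hi : IsHumpAt M i) :
    FirstNonFlatIsU (humpMap M i) := by
  obtain ⟨A, k, B, rfl, rfl⟩ := isHumpAt_iff.1 hi
  rw [humpMap_hump]
  exact firstNonFlatIsU_iff.2 ⟨k, _, rfl⟩

theorem eq_of_humpMap_eq {M M' : List MStep} {i i' : ℕ} (hM : IsMotzkin M) (hi : IsHumpAt M i)
    (hM' : IsMotzkin M') (hi' : IsHumpAt M' i') (h : humpMap M i = humpMap M' i') :
    M = M' ∧ i = i' := by
  obtain ⟨A, k, B, rfl, rfl⟩ := isHumpAt_iff.1 hi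
  obtain ⟨A', k', B', rfl, rfl⟩ := isHumpAt_iff.1 hi'
  rw [humpMap_hump, humpMap_hump] at h
  obtain ⟨rfl, hBA⟩ := replicate_F_append_U_inj h
  obtain ⟨-, hA, hB⟩ := isMotzkin_hump_iff.1 hM
  obtain ⟨-, hA', hB'⟩ := isMotzkin_hump_iff.1 hM'
  obtain ⟨rfl, rfl⟩ := eq_of_append_D_eq hBA hB hA hB' hA'
  exact ⟨rfl, rfl⟩

theorem exists_humpMap_eq {w : List MStep} (hw : IsSuperMotzkin w) (hU : FirstNonFlatIsU w) :
    ∃ M i, IsMotzkin M ∧ IsHumpAt M i ∧ humpMap M i = w := by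
  obtain ⟨k, t, rfl⟩ := firstNonFlatIsU_iff.1 hU
  have ht : height t = -1 := by
    have := isSuperMotzkin_iff.1 hw
    simp only [height_append, height_replicate_F, height_cons_U] at this
    linarith
  obtain ⟨B, A, rfl, hB, hA⟩ := exists_eq_append_D_endsAtMin_staysNonneg (by omega : height t < 0)
  refine ⟨A ++ U :: (List.replicate k F ++ D :: B), A.length,
    isMotzkin_hump_iff.2 ⟨?_, hA, hB⟩, isHumpAt_iff.2 ⟨A, k, B, rfl, rfl⟩, humpMap_hump A B k⟩
  simp only [height_append, height_cons_D] at ht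
  linarith

end MStep

theorem humps_equiv_superMotzkin_firstU (n : ℕ) :
    Nonempty
      ({p : List MStep × ℕ // p.1.length = n ∧ IsMotzkin p.1 ∧ IsHumpAt p.1 p.2} ≃
        {w : List MStep // w.length = n ∧ IsSuperMotzkin w ∧ FirstNonFlatIsU w}) := by
  refine ⟨Equiv.ofBijective (fun p => ⟨MStep.humpMap p.1.1 p.1.2, ?_⟩) ⟨?_, ?_⟩⟩
  · obtain ⟨⟨M, i⟩, rfl, hM, hi⟩ := p
    have hperm := MStep.humpMap_perm hi
    refine ⟨hperm.length_eq, ?_, MStep.firstNonFlatIsU_humpMap hi⟩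
    rw [IsSuperMotzkin, hperm.count_eq, hperm.count_eq]
    exact hM.1
  · intro ⟨⟨M, i⟩, _, hM, hi⟩ ⟨⟨M', i'⟩, _, hM', hi'⟩ h
    obtain ⟨rfl, rfl⟩ := MStep.eq_of_humpMap_eq hM hi hM' hi' (congrArg Subtype.val h)
    rfl
  · rintro ⟨w, rfl, hw, hU⟩
    obtain ⟨M, i, hM, hi, rfl⟩ := MStep.exists_humpMap_eq hw hU
    exact ⟨⟨(M, i), (MStep.humpMap_perm hi).length_eq.symm, hM, hi⟩, rfl⟩
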